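/- arXiv:1812.03499 — 9 statements merged into one kernel-verified Lean document; each statement's English description precedes it below -/
import Mathlib

section
/- Let T be a bounded linear operator on a complex Hilbert space H with canonical polar decomposition T = V|T| (where V is the partial isometry with N(V) = N(T)), and let T̂ = (1/2)(V|T| + |T|V) be the mean transform of T. Then the kernel of T̂ equals the kernel of T. In particular, T̂ = 0 if and only if T = 0. -/
/-!
If `T̂ x = 0` then `V|T|x = -|T|Vx`. Applying `V*` and using that `V*V` is the projection onto
`N(V)^⊥ = N(|T|)^⊥ ⊇ R(|T|)`, we get `|T|x = -V*|T|Vx`, hence `⟨|T|x, x⟩ = -⟨|T|Vx, Vx⟩`.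
The left side is `≥ 0` and the right side `≤ 0`, so `⟨|T|x, x⟩ = 0`, which for a positive operator forces
`|T|x = 0`, i.e. `Tx = 0`. Conversely `N(T) = N(V) = N(|T|)` is killed by both terms of `T̂`.
-/

open ContinuousLinearMap Filter Topology

structure PolarDecomp {H : Type*} [NormedAddCommGroup H] [InnerProductSpace ℂ H]
    [CompleteSpace H] (T : H →L[ℂ] H) where
  V : H →L[ℂ] H
  R : H →L[ℂ] H
  posR : R.IsPositive
  sqR : R * R = adjoint T * T
  partIso : V * adjoint V * V = V
  kerV : LinearMap.ker (V : H →ₗ[ℂ] H) = LinearMap.ker (T : H →ₗ[ℂ] H)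
  factor : T = V * R

noncomputable def PolarDecomp.mean {H : Type*} [NormedAddCommGroup H] [InnerProductSpace ℂ H]
    [CompleteSpace H] {T : H →L[ℂ] H} (P : PolarDecomp T) : H →L[ℂ] H :=
  (2⁻¹ : ℂ) • (P.V * P.R + P.R * P.V)

open scoped ComplexOrder

section General

variable {𝕜 E F G : Type*} [RCLike 𝕜] [NormedAddCommGroup E] [InnerProductSpace 𝕜 E]
  [CompleteSpace E] [NormedAddCommGroup F] [InnerProductSpace 𝕜 F] [CompleteSpace F]
  [NormedAddCommGroup G] [InnerProductSpace 𝕜 G] [CompleteSpace G]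

theorem ContinuousLinearMap.adjoint_comp_self_comp_eq_of_ker_le {V : E →L[𝕜] F} {A : G →L[𝕜] E}
    (hV : (V ∘L adjoint V) ∘L V = V)
    (hker : LinearMap.ker (V : E →ₗ[𝕜] F) ≤ LinearMap.ker (adjoint A : E →ₗ[𝕜] G)) :
    (adjoint V ∘L V) ∘L A = A := by
  ext y
  set w := A y - adjoint V (V (A y))
  have hVw : V w = 0 := by
    simp only [w, map_sub, sub_eq_zero]
    exact (congrArg (· (A y)) hV).symm
  have hAw : adjoint A w = 0 := hker hVw
  have hw : inner 𝕜 w w = 0 := by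
    rw [inner_sub_right, ← adjoint_inner_left A, hAw, adjoint_inner_right, hVw,
      inner_zero_left, inner_zero_left, sub_zero]
  exact (sub_eq_zero.mp (inner_self_eq_zero.mp hw)).symm

theorem ContinuousLinearMap.ker_eq_ker_of_mul_self_eq {R : E →L[𝕜] E} {T : E →L[𝕜] F}
    (hR : IsSelfAdjoint R) (h : R * R = adjoint T ∘L T) :
    LinearMap.ker (R : E →ₗ[𝕜] E) = LinearMap.ker (T : E →ₗ[𝕜] F) := by
  rw [← ker_adjoint_comp_self T, ← h, ← ker_adjoint_comp_self R, hR.adjoint_eq]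
  rfl

end General

section Hilbert

variable {H : Type*} [NormedAddCommGroup H] [InnerProductSpace ℂ H] [CompleteSpace H]

theorem ContinuousLinearMap.IsPositive.apply_eq_zero_of_inner_eq_zero {R : H →L[ℂ] H}
    (hR : R.IsPositive) {x : H} (h : inner ℂ (R x) x = 0) : R x = 0 := by
  have hR₀ : 0 ≤ R := (nonneg_iff_isPositive R).mpr hR
  set S := CFC.sqrt R
  have hSS : S * S = R := CFC.sqrt_mul_sqrt_self R hR₀
  have hS : IsSelfAdjoint S := (CFC.sqrt_nonneg R).isSelfAdjoint
  have hSx : S x = 0 := by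
    rw [← inner_self_eq_zero (𝕜 := ℂ), ← adjoint_inner_left, hS.adjoint_eq, ← mul_apply_eq_comp,
      hSS, h]
  rw [← hSS, mul_apply_eq_comp, hSx, map_zero]

namespace PolarDecomp

variable {T : H →L[ℂ] H} (P : PolarDecomp T)

theorem ker_R : LinearMap.ker (P.R : H →ₗ[ℂ] H) = LinearMap.ker (T : H →ₗ[ℂ] H) :=
  ker_eq_ker_of_mul_self_eq P.posR.isSelfAdjoint P.sqR

theorem adjoint_V_mul_V_mul_R : adjoint P.V * P.V * P.R = P.R :=
  adjoint_comp_self_comp_eq_of_ker_le P.partIso <| by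
    rw [P.posR.isSelfAdjoint.adjoint_eq, P.ker_R, P.kerV]

theorem mean_apply (x : H) : P.mean x = (2⁻¹ : ℂ) • (P.V (P.R x) + P.R (P.V x)) := rfl

theorem mean_apply_eq_zero_iff (x : H) : P.mean x = 0 ↔ T x = 0 := by
  have hR : ∀ y, P.R y = 0 ↔ T y = 0 := fun y => SetLike.ext_iff.mp P.ker_R y
  have hV : ∀ y, P.V y = 0 ↔ T y = 0 := fun y => SetLike.ext_iff.mp P.kerV y
  rw [mean_apply, smul_eq_zero, or_iff_right (by norm_num), add_eq_zero_iff_eq_neg]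
  constructor
  · intro hx
    have hRx : P.R x = -adjoint P.V (P.R (P.V x)) := by
      rw [← map_neg, ← hx, ← mul_apply_eq_comp, ← mul_apply_eq_comp, adjoint_V_mul_V_mul_R]
    have hinner : inner ℂ (P.R x) x = -inner ℂ (P.R (P.V x)) (P.V x) := by
      rw [hRx, inner_neg_left, adjoint_inner_left]
    have hzero : inner ℂ (P.R x) x = 0 := le_antisymm
      (hinner ▸ neg_nonpos.mpr (P.posR.inner_nonneg_left _)) (P.posR.inner_nonneg_left x)
    exact (hR x).mp (P.posR.apply_eq_zero_of_inner_eq_zero hzero)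
  · intro hx
    rw [(hR x).mpr hx, (hV x).mpr hx, map_zero, map_zero, neg_zero]

end PolarDecomp

end Hilbert

theorem mean_transform_ker {H : Type*} [NormedAddCommGroup H] [InnerProductSpace ℂ H]
    [CompleteSpace H] (T : H →L[ℂ] H) (P : PolarDecomp T) :
    LinearMap.ker (P.mean : H →ₗ[ℂ] H) = LinearMap.ker (T : H →ₗ[ℂ] H) ∧ (P.mean = 0 ↔ T = 0) := by
  refine ⟨SetLike.ext P.mean_apply_eq_zero_iff, ?_⟩
  simp only [ContinuousLinearMap.ext_iff, zero_apply, P.mean_apply_eq_zero_iff]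
end

section
/- Let T be a bounded linear operator on a Hilbert space H with mean transform T̂. Then T is invertible if and only if T̂ is invertible and the range of T is closed. -/
open ContinuousLinearMap Filter Topology

/-! If `T` is injective with closed range, it is bounded below, hence so is `R = |T|`
(`‖R x‖ = ‖T x‖`), and the self-adjoint `R` is invertible; moreover `V` is an isometry. Then
`V† T̂ = ½ (R + V† R V)` is invertible, so `T̂` is invertible iff `V` is, iff `T = V R` is.
Both sides of the equivalence force `T` to be injective with closed range: an invertible `T̂`
kills `ker T = ker V = ker R`. -/

namespace ContinuousLinearMap

variable {𝕜 E : Type*} [RCLike 𝕜] [NormedAddCommGroup E] [InnerProductSpace 𝕜 E] [CompleteSpace E]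

theorem IsSelfAdjoint.isUnit_of_antilipschitz {A : E →L[𝕜] E} (hA : IsSelfAdjoint A) {K : NNReal}
    (hK : AntilipschitzWith K A) : IsUnit A := by
  rw [isUnit_iff_bijective, bijective_iff_dense_range_and_antilipschitz]
  refine ⟨?_, K, hK⟩
  rw [Submodule.topologicalClosure_eq_top_iff, orthogonal_range, hA.adjoint_eq,
    LinearMap.ker_eq_bot]
  exact hK.injective

theorem adjoint_mul_self_eq_one_of_injective {V : E →L[𝕜] E} (hV : V * adjoint V * V = V)
    (hinj : Function.Injective V) : adjoint V * V = 1 := by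
  ext x
  apply hinj
  simpa using congr($hV x)

variable {H : Type*} [NormedAddCommGroup H] [InnerProductSpace ℂ H] [CompleteSpace H]

theorem isUnit_add_adjoint_conj {A : H →L[ℂ] H} (hA : A.IsPositive) (hA' : IsUnit A)
    (B : H →L[ℂ] H) : IsUnit (A + adjoint B * A * B) :=
  ((hA'.isStrictlyPositive ((nonneg_iff_isPositive A).2 hA)).add_nonneg
    ((nonneg_iff_isPositive _).2 (hA.adjoint_conj B))).isUnit

end ContinuousLinearMap

namespace PolarDecomp

variable {H : Type*} [NormedAddCommGroup H] [InnerProductSpace ℂ H] [CompleteSpace H]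
  {T : H →L[ℂ] H} (P : PolarDecomp T)

theorem norm_R_apply (x : H) : ‖P.R x‖ = ‖T x‖ := by
  have key : inner ℂ (P.R x) (P.R x) = inner ℂ (T x) (T x) :=
    calc inner ℂ (P.R x) (P.R x) = inner ℂ x (P.R (P.R x)) := P.posR.isSymmetric x (P.R x)
      _ = inner ℂ x (adjoint T (T x)) := congr(inner ℂ x ($P.sqR x))
      _ = inner ℂ (T x) (T x) := adjoint_inner_right T x (T x)
  rw [inner_self_eq_norm_sq_to_K, inner_self_eq_norm_sq_to_K] at key
  exact (sq_eq_sq₀ (norm_nonneg _) (norm_nonneg _)).1 (by exact_mod_cast key)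

theorem injective_V_iff : Function.Injective P.V ↔ Function.Injective T := by
  simpa only [LinearMap.ker_eq_bot, ContinuousLinearMap.coe_coe] using
    Iff.of_eq congr($(P.kerV) = ⊥)

theorem antilipschitz_R {K : NNReal} (hK : AntilipschitzWith K T) : AntilipschitzWith K P.R :=
  AddMonoidHomClass.antilipschitz_of_bound P.R fun x =>
    P.norm_R_apply x ▸ ZeroHomClass.bound_of_antilipschitz T hK x

theorem injective_of_isUnit_mean (h : IsUnit P.mean) : Function.Injective T := by
  have hM := (injective_iff_map_eq_zero P.mean).1 (isUnit_iff_bijective.1 h).injective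
  refine (injective_iff_map_eq_zero T).2 fun x hx => hM x ?_
  have hRx : P.R x = 0 := norm_eq_zero.1 (by rw [P.norm_R_apply, hx, norm_zero])
  have hVx : P.V x = 0 := by
    change x ∈ LinearMap.ker (P.V : H →ₗ[ℂ] H)
    rw [P.kerV]
    exact hx
  simp [mean, hRx, hVx]

theorem adjoint_V_mul_mean (hV : adjoint P.V * P.V = 1) :
    adjoint P.V * P.mean = (2⁻¹ : ℂ) • (P.R + adjoint P.V * P.R * P.V) := by
  rw [mean, mul_smul_comm, mul_add, ← mul_assoc, hV, one_mul, mul_assoc]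

theorem isUnit_mean_iff_isUnit_V (hV : adjoint P.V * P.V = 1) (hR : IsUnit P.R) :
    IsUnit P.mean ↔ IsUnit P.V := by
  -- `V† T̂ = ½ (R + V† R V) ≥ ½ R` is strictly positive.
  have hS : IsUnit (adjoint P.V * P.mean) := by
    rw [P.adjoint_V_mul_mean hV]
    exact (isUnit_smul_iff (Units.mk0 (2⁻¹ : ℂ) (by norm_num)) _).2
      (isUnit_add_adjoint_conj P.posR hR P.V)
  rw [← isUnit_star (a := P.V), star_eq_adjoint]
  exact ⟨fun hM => (hM.mul_right_iff).1 hS, fun hV' => (hV'.mul_left_iff).1 hS⟩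

theorem isUnit_iff_isUnit_mean (hinj : Function.Injective T) (hcl : IsClosed (Set.range T)) :
    IsUnit T ↔ IsUnit P.mean := by
  obtain ⟨K, hK⟩ := T.antilipschitz_of_injective_of_isClosed_range hinj hcl
  have hR : IsUnit P.R := P.posR.isSelfAdjoint.isUnit_of_antilipschitz (P.antilipschitz_R hK)
  have hV : adjoint P.V * P.V = 1 := adjoint_mul_self_eq_one_of_injective P.partIso
    (P.injective_V_iff.2 hinj)
  rw [P.isUnit_mean_iff_isUnit_V hV hR, ← hR.mul_right_iff (a := P.V), ← P.factor]

end PolarDecomp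

theorem mean_transform_invertible {H : Type*} [NormedAddCommGroup H] [InnerProductSpace ℂ H]
    [CompleteSpace H] (T : H →L[ℂ] H) (P : PolarDecomp T) :
    IsUnit T ↔ (IsUnit P.mean ∧ IsClosed (Set.range fun x => T x)) := by
  constructor
  · intro hT
    have hbij := isUnit_iff_bijective.1 hT
    have hcl : IsClosed (Set.range T) := by
      rw [hbij.surjective.range_eq]
      exact isClosed_univ
    exact ⟨(P.isUnit_iff_isUnit_mean hbij.injective hcl).1 hT, hcl⟩
  · rintro ⟨hM, hcl⟩
    exact (P.isUnit_iff_isUnit_mean (P.injective_of_isUnit_mean hM) hcl).2 hM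
end

section
/- Let T be the weighted bilateral shift on ℓ²(ℤ) with weights α_n = 1 if n is even and α_n = 1/n² if n is odd. Then T is not invertible, but its mean transform T̂ (the bilateral weighted shift with weights (α_n + α_{n+1})/2) is invertible. -/
/-!
If `T` is invertible then `‖e n‖ ≤ ‖T⁻¹‖ ‖T e n‖ = ‖T⁻¹‖ α_n`, so the weights of an invertible
weighted shift are bounded away from `0`; the odd weights `1 / n²` are not. Of two consecutive
weights `α_n, α_{n+1}` one equals `1`, so every mean weight is at least `1 / 2`. Hence the backward
weighted shift `e (n + 1) ↦ 2 / (α_n + α_{n+1}) • e n` is bounded, and it inverts `T̂`. It is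
realised as a diagonal operator composed with the reindexing isometry along `n ↦ n + 1`.
-/

open Filter Topology

noncomputable def bilatWt (n : ℤ) : ℝ := if Even n then 1 else 1 / (n ^ 2 : ℝ)

open scoped ENNReal lp

theorem Memℓp.comp_equiv {α β E : Type*} [NormedAddCommGroup E] {p : ℝ≥0∞} {f : α → E}
    (hf : Memℓp f p) (σ : β ≃ α) : Memℓp (f ∘ σ) p := by
  rcases p.trichotomy with rfl | rfl | hp
  · exact memℓp_zero (hf.finite_dsupport.preimage σ.injective.injOn)
  · exact memℓp_infty ((σ.surjective.range_comp fun i => ‖f i‖).symm ▸ hf.bddAbove)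
  · exact memℓp_gen (σ.summable_iff.mpr (hf.summable hp))

namespace lp

section CompEquiv

variable {α β E : Type*} [NormedAddCommGroup E] {p : ℝ≥0∞} [Fact (1 ≤ p)]
variable (𝕜 : Type*) [NormedField 𝕜] [NormedSpace 𝕜 E]

noncomputable def compEquiv (σ : β ≃ α) : ℓ^p(α, E) →ₗᵢ[𝕜] ℓ^p(β, E) where
  toFun f := ⟨f ∘ σ, (lp.memℓp f).comp_equiv σ⟩
  map_add' _ _ := rfl
  map_smul' _ _ := rfl
  norm_map' f := by
    rcases p.dichotomy with rfl | hp
    · exact σ.iSup_comp (g := fun i => ‖f i‖)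
    · simp only [norm_eq_tsum_rpow (zero_lt_one.trans_le hp)]
      exact congrArg (· ^ (1 / p.toReal)) (σ.tsum_eq fun i => ‖f i‖ ^ p.toReal)

@[simp]
theorem compEquiv_apply (σ : β ≃ α) (f : ℓ^p(α, E)) (i : β) :
    compEquiv 𝕜 σ f i = f (σ i) := rfl

theorem compEquiv_single [DecidableEq α] [DecidableEq β] (σ : β ≃ α) (i : α) (a : E) :
    compEquiv 𝕜 σ (lp.single p i a) = lp.single p (σ.symm i) a := by
  ext j
  simp [Pi.single_apply, ← σ.eq_symm_apply]

end CompEquiv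

variable {ι 𝕜 : Type*} [NontriviallyNormedField 𝕜] {p : ℝ≥0∞} [Fact (1 ≤ p)] [DecidableEq ι]

theorem mapCLM_single {E F : ι → Type*} [∀ i, NormedAddCommGroup (E i)]
    [∀ i, NormedSpace 𝕜 (E i)] [∀ i, NormedAddCommGroup (F i)] [∀ i, NormedSpace 𝕜 (F i)]
    (T : ∀ i, E i →L[𝕜] F i) {K : ℝ} (hK : 0 ≤ K) (hTK : ∀ i, ‖T i‖ ≤ K) (i : ι) (x : E i) :
    mapCLM p T hK hTK (lp.single p i x) = lp.single p i (T i x) := by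
  ext j
  by_cases h : j = i
  · subst h; simp
  · simp [h]

theorem continuousLinearMap_ext_single {F : Type*} [AddCommGroup F] [TopologicalSpace F]
    [Module 𝕜 F] [T2Space F] (hp : p ≠ ∞) {A B : ℓ^p(ι, 𝕜) →L[𝕜] F}
    (h : ∀ i, A (lp.single p i 1 : ℓ^p(ι, 𝕜)) = B (lp.single p i 1 : ℓ^p(ι, 𝕜))) : A = B := by
  ext f
  have hsingle : ∀ i, lp.single p i (f i) = f i • (lp.single p i 1 : ℓ^p(ι, 𝕜)) := fun i => by
    rw [← lp.single_smul, smul_eq_mul, mul_one]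
  have hs := lp.hasSum_single hp f
  simp only [hsingle] at hs
  exact (hs.mapL A).unique (by simpa only [map_smul, h] using hs.mapL B)

end lp

section WeightedShift

variable {𝕜 : Type*} [NontriviallyNormedField 𝕜] {p : ℝ≥0∞} [Fact (1 ≤ p)]

def IsWeightedShift (T : ℓ^p(ℤ, 𝕜) →L[𝕜] ℓ^p(ℤ, 𝕜)) (w : ℤ → 𝕜) : Prop :=
  ∀ n, T (lp.single p n 1) = w n • lp.single p (n + 1) 1

noncomputable def weightedBackwardShift (c : ℤ → 𝕜) {C : ℝ} (hC : ∀ n, ‖c n‖ ≤ C) :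
    ℓ^p(ℤ, 𝕜) →L[𝕜] ℓ^p(ℤ, 𝕜) :=
  lp.mapCLM p (fun n => ContinuousLinearMap.toSpanSingleton 𝕜 (c n))
      ((norm_nonneg _).trans (hC 0))
      (fun n => (ContinuousLinearMap.norm_toSpanSingleton _).trans_le (hC n)) ∘L
    (lp.compEquiv 𝕜 (Equiv.addRight 1)).toContinuousLinearMap

theorem weightedBackwardShift_single (c : ℤ → 𝕜) {C : ℝ} (hC : ∀ n, ‖c n‖ ≤ C) (n : ℤ) :
    weightedBackwardShift (p := p) c hC (lp.single p n 1) =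
      c (n - 1) • lp.single p (n - 1) 1 := by
  simp [weightedBackwardShift, lp.compEquiv_single, lp.mapCLM_single, ← lp.single_smul,
    sub_eq_add_neg]

theorem IsWeightedShift.isUnit (hp : p ≠ ∞) {T : ℓ^p(ℤ, 𝕜) →L[𝕜] ℓ^p(ℤ, 𝕜)} {w : ℤ → 𝕜}
    (hT : IsWeightedShift T w) (hw : ∀ n, w n ≠ 0) {C : ℝ} (hC : ∀ n, ‖(w n)⁻¹‖ ≤ C) :
    IsUnit T := by
  set S := weightedBackwardShift (p := p) (fun n => (w n)⁻¹) hC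
  have hTS : T * S = 1 := lp.continuousLinearMap_ext_single hp fun n => by
    simp [S, weightedBackwardShift_single, hT (n - 1), smul_smul, hw]
  have hST : S * T = 1 := lp.continuousLinearMap_ext_single hp fun n => by
    simp [S, weightedBackwardShift_single, hT n, smul_smul, hw]
  exact ⟨⟨T, S, hTS, hST⟩, rfl⟩

theorem IsWeightedShift.exists_pos_le_norm {T : ℓ^p(ℤ, 𝕜) →L[𝕜] ℓ^p(ℤ, 𝕜)} {w : ℤ → 𝕜}
    (hT : IsWeightedShift T w) (hu : IsUnit T) : ∃ c > 0, ∀ n, c ≤ ‖w n‖ := by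
  obtain ⟨B, hBT⟩ := hu.exists_left_inv
  have hp : 0 < p := zero_lt_one.trans_le Fact.out
  have key : ∀ n, 1 ≤ ‖B‖ * ‖w n‖ := fun n =>
    calc 1 = ‖(lp.single p n 1 : ℓ^p(ℤ, 𝕜))‖ := by rw [lp.norm_single hp, norm_one]
      _ = ‖B (T (lp.single p n 1))‖ := by
          rw [← mul_apply_eq_comp, hBT, one_apply_eq_self]
      _ = ‖w n‖ * ‖B (lp.single p (n + 1) 1)‖ := by rw [hT n, map_smul, norm_smul]
      _ ≤ ‖w n‖ * ‖B‖ := by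
          gcongr
          simpa [lp.norm_single hp] using B.le_opNorm (lp.single p (n + 1) 1)
      _ = ‖B‖ * ‖w n‖ := mul_comm _ _
  have hB : 0 < ‖B‖ := pos_of_mul_pos_left (zero_lt_one.trans_le (key 0)) (norm_nonneg _)
  exact ⟨‖B‖⁻¹, inv_pos.2 hB, fun n => (inv_le_iff_one_le_mul₀' hB).2 (key n)⟩

end WeightedShift

theorem bilatWt_nonneg (n : ℤ) : 0 ≤ bilatWt n := by
  unfold bilatWt
  split_ifs <;> positivity

theorem one_le_bilatWt_add (n : ℤ) : 1 ≤ bilatWt n + bilatWt (n + 1) := by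
  rcases Int.even_or_odd n with hn | hn
  · have : bilatWt n = 1 := if_pos hn
    linarith [bilatWt_nonneg (n + 1)]
  · have : bilatWt (n + 1) = 1 := if_pos hn.add_one
    linarith [bilatWt_nonneg n]

theorem exists_bilatWt_lt {c : ℝ} (hc : 0 < c) : ∃ n, bilatWt n < c := by
  obtain ⟨m, hm⟩ := exists_nat_gt c⁻¹
  refine ⟨2 * m + 1, ?_⟩
  have hodd : ¬Even (2 * (m : ℤ) + 1) := Int.not_even_iff_odd.2 (odd_two_mul_add_one _)
  rw [bilatWt, if_neg hodd, div_lt_iff₀ (by positivity), ← div_lt_iff₀' hc, one_div]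
  push_cast
  nlinarith

theorem bilateral_shift_example
    (T That : lp (fun _ : ℤ => ℂ) 2 →L[ℂ] lp (fun _ : ℤ => ℂ) 2)
    (hT : ∀ n : ℤ, T (lp.single 2 n 1) = (bilatWt n : ℂ) • lp.single 2 (n + 1) 1)
    (hThat : ∀ n : ℤ, That (lp.single 2 n 1) =
      (((bilatWt n + bilatWt (n + 1)) / 2 : ℝ) : ℂ) • lp.single 2 (n + 1) 1) :
    ¬ IsUnit T ∧ IsUnit That := by
  refine ⟨fun hu => ?_, ?_⟩
  · obtain ⟨c, hc, hcw⟩ := IsWeightedShift.exists_pos_le_norm hT hu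
    obtain ⟨n, hn⟩ := exists_bilatWt_lt hc
    have hcn := hcw n
    rw [Complex.norm_real, Real.norm_of_nonneg (bilatWt_nonneg n)] at hcn
    linarith
  · have hmean : ∀ n, 2⁻¹ ≤ (bilatWt n + bilatWt (n + 1)) / 2 := fun n => by
      linarith [one_le_bilatWt_add n]
    have hpos : ∀ n, 0 < (bilatWt n + bilatWt (n + 1)) / 2 := fun n =>
      (inv_pos.2 two_pos).trans_le (hmean n)
    refine IsWeightedShift.isUnit (by simp) hThat (C := 2) (fun n => ?_) (fun n => ?_)
    · exact_mod_cast (hpos n).ne'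
    · rw [norm_inv, Complex.norm_real, Real.norm_of_nonneg (hpos n).le]
      exact inv_le_of_inv_le₀ two_pos (hmean n)
end

section
/- Let T be a bounded operator on a Hilbert space. Then the mean transform T̂ equals the identity operator if and only if T equals the identity operator. -/
/-!
If `V` and `|T|` commute, both `V|T|` and `|T|V` equal `T`, so `T̂ = T`. If `T̂ = 1`, then
`|T|` commutes with `V|T| + |T|V = 2`, and expanding `|T|(V|T| + |T|V) = (V|T| + |T|V)|T|`
shows that `V` commutes with `|T|²`, hence with its square root `|T|`. Conversely, `T = 1`
forces `|T|² = 1`, so `|T| = 1` commutes with `V`.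
-/

open ContinuousLinearMap Filter Topology

theorem Commute.mul_self_of_commute_anticommutator {R : Type*} [Ring R] {a b : R}
    (h : Commute a (b * a + a * b)) : Commute (a * a) b :=
  calc a * a * b = a * (b * a + a * b) - a * b * a := by noncomm_ring
    _ = (b * a + a * b) * a - a * b * a := by rw [h.eq]
    _ = b * (a * a) := by noncomm_ring

theorem Commute.of_mul_self_left {A : Type*} [NonUnitalCStarAlgebra A] [PartialOrder A]
    [StarOrderedRing A] {a b : A} (ha : 0 ≤ a) (h : Commute (a * a) b) : Commute a b :=
  CFC.sqrt_mul_self a ha ▸ h.cfcₙ_nnreal NNReal.sqrt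

namespace PolarDecomp

variable {H : Type*} [NormedAddCommGroup H] [InnerProductSpace ℂ H] [CompleteSpace H]
  {T : H →L[ℂ] H} (P : PolarDecomp T)

theorem R_nonneg : 0 ≤ P.R :=
  (nonneg_iff_isPositive P.R).mpr P.posR

theorem mean_eq_self_of_commute (h : Commute P.V P.R) : P.mean = T := by
  rw [mean, ← h.eq, ← two_smul ℂ, smul_smul, inv_mul_cancel₀ two_ne_zero, one_smul, ← P.factor]

theorem commute_of_mean_eq_one (h : P.mean = 1) : Commute P.V P.R := by
  have hsum : (2 : ℂ) • P.mean = P.V * P.R + P.R * P.V := by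
    rw [mean, smul_smul, mul_inv_cancel₀ two_ne_zero, one_smul]
  have hR : Commute P.R (P.V * P.R + P.R * P.V) :=
    hsum ▸ h ▸ (Commute.one_right P.R).smul_right 2
  exact (Commute.of_mul_self_left P.R_nonneg hR.mul_self_of_commute_anticommutator).symm

theorem R_eq_one_of_eq_one (hT : T = 1) : P.R = 1 := by
  refine (CFC.sqrt_unique ?_ P.R_nonneg).symm.trans (CFC.sqrt_one (A := H →L[ℂ] H))
  rw [P.sqR, hT, mul_one]
  exact adjoint_id

end PolarDecomp

theorem mean_transform_eq_one_iff {H : Type*} [NormedAddCommGroup H] [InnerProductSpace ℂ H]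
    [CompleteSpace H] (T : H →L[ℂ] H) (P : PolarDecomp T) :
    P.mean = 1 ↔ T = 1 := by
  constructor
  · intro h
    rw [← h, P.mean_eq_self_of_commute (P.commute_of_mean_eq_one h)]
  · intro hT
    rw [← hT, P.mean_eq_self_of_commute (P.R_eq_one_of_eq_one hT ▸ Commute.one_right P.V)]
end

section
/- For any bounded operator T on a Hilbert space, ‖Δ(T)‖ ≤ ‖T̂‖ ≤ ‖T‖, where Δ(T) = |T|^{1/2} V |T|^{1/2} is the Aluthge transform and T̂ is the mean transform. In particular, the spectral radius of T satisfies r(T) ≤ ‖T̂‖. -/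
/-!
Heinz's inequality `‖S V S‖ ≤ ‖S² V + V S²‖ / 2`, for any symmetric `S`, comes from the heat flows
`u(t) = exp (-t S²) x` and `v(t) = exp (-t S²) y`. The derivative of `t ↦ ⟪S v(t), V S u(t)⟫` is
`-⟪S v(t), (S² V + V S²) S u(t)⟫`; the energy identity `d/dt ‖u‖² = -2 ‖S u‖²` gives
`∫₀^∞ ‖S u‖² ≤ ‖x‖² / 2`, and as `‖S u(t)‖²` is antitone it is `O(1/t)`. Integrating over
`[0, ∞)` with `2ab ≤ a² + b²` bounds `⟪S y, V S x⟫` for unit vectors `x, y`.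
For `S = |T|^{1/2}` this is `‖Δ(T)‖ ≤ ‖T̂‖`; `‖T̂‖ ≤ ‖T‖` because `‖|T|‖ = ‖T‖` and the partial
isometry `V` is a contraction; and `T = (V S) S` gives `r(T) = r(S V S) ≤ ‖Δ(T)‖`.
-/

open ContinuousLinearMap Filter Topology

open scoped InnerProductSpace

theorem norm_inner_apply_le {E : Type*} [NormedAddCommGroup E] [InnerProductSpace ℂ E]
    (W : E →L[ℂ] E) (x y : E) : ‖⟪y, W x⟫_ℂ‖ ≤ ‖W‖ * ((‖y‖ ^ 2 + ‖x‖ ^ 2) / 2) :=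
  calc ‖⟪y, W x⟫_ℂ‖ ≤ ‖y‖ * (‖W‖ * ‖x‖) :=
        (norm_inner_le_norm _ _).trans (by gcongr; exact W.le_opNorm x)
    _ ≤ ‖W‖ * ((‖y‖ ^ 2 + ‖x‖ ^ 2) / 2) := by
        nlinarith [two_mul_le_add_sq ‖y‖ ‖x‖, norm_nonneg W]

section HeatFlow

variable {H : Type*} [NormedAddCommGroup H] [InnerProductSpace ℂ H] {S : H →L[ℂ] H}

def SolvesHeatEq (S : H →L[ℂ] H) (u : ℝ → H) : Prop :=
  ∀ t, HasDerivAt u (-(S * S) (u t)) t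

theorem solvesHeatEq_exp [CompleteSpace H] (S : H →L[ℂ] H) (x : H) :
    SolvesHeatEq S (fun t : ℝ => NormedSpace.exp (t • -(S * S)) x) := fun t =>
  ((apply ℂ H x).restrictScalars ℝ).hasFDerivAt.comp_hasDerivAt t
    (hasDerivAt_exp_smul_const' (-(S * S)) t)

namespace SolvesHeatEq

variable {u v : ℝ → H}

theorem continuous (hu : SolvesHeatEq S u) : Continuous u :=
  continuous_iff_continuousAt.2 fun t => (hu t).continuousAt

theorem apply (hu : SolvesHeatEq S u) : SolvesHeatEq S (fun t => S (u t)) := fun t =>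
  ((S.restrictScalars ℝ).hasFDerivAt.comp_hasDerivAt t (hu t)).congr_deriv (by simp)

variable (hS : (S : H →ₗ[ℂ] H).IsSymmetric)
include hS

theorem hasDerivAt_norm_sq (hu : SolvesHeatEq S u) (t : ℝ) :
    HasDerivAt (fun t => ‖u t‖ ^ 2) (-(2 * ‖S (u t)‖ ^ 2)) t := by
  let _ := InnerProductSpace.complexToReal (G := H)
  refine (hu t).norm_sq.congr_deriv ?_
  rw [real_inner_eq_re_inner ℂ, inner_neg_right, mul_apply_eq_comp, ← coe_coe S, ← hS, map_neg,
    inner_self_eq_norm_sq, coe_coe, mul_neg]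

theorem antitone_norm_sq (hu : SolvesHeatEq S u) : Antitone fun t => ‖u t‖ ^ 2 :=
  antitone_of_deriv_nonpos (fun t => (hu.hasDerivAt_norm_sq hS t).differentiableAt)
    fun t => by rw [(hu.hasDerivAt_norm_sq hS t).deriv]; nlinarith

theorem integral_norm_sq_le (hu : SolvesHeatEq S u) (T : ℝ) :
    ∫ t in 0..T, ‖S (u t)‖ ^ 2 ≤ ‖u 0‖ ^ 2 / 2 := by
  have hc := hu.continuous
  have := intervalIntegral.integral_eq_sub_of_hasDerivAt
    (fun t _ => hu.hasDerivAt_norm_sq hS t) ((by fun_prop : Continuous _).intervalIntegrable 0 T)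
  rw [intervalIntegral.integral_neg, intervalIntegral.integral_const_mul] at this
  nlinarith [sq_nonneg ‖u T‖]

theorem mul_norm_sq_le (hu : SolvesHeatEq S u) {T : ℝ} (hT : 0 ≤ T) :
    T * ‖S (u T)‖ ^ 2 ≤ ‖u 0‖ ^ 2 / 2 :=
  calc T * ‖S (u T)‖ ^ 2 = ∫ _ in 0..T, ‖S (u T)‖ ^ 2 := by simp
    _ ≤ ∫ t in 0..T, ‖S (u t)‖ ^ 2 :=
        intervalIntegral.integral_mono_on hT intervalIntegrable_const
          ((hu.apply.continuous.norm.pow 2).intervalIntegrable 0 T)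
          fun _ ht => hu.apply.antitone_norm_sq hS ht.2
    _ ≤ ‖u 0‖ ^ 2 / 2 := hu.integral_norm_sq_le hS T

theorem hasDerivAt_inner (hu : SolvesHeatEq S u) (hv : SolvesHeatEq S v) (V : H →L[ℂ] H)
    (t : ℝ) : HasDerivAt (fun t => ⟪v t, V (u t)⟫_ℂ)
      (-⟪v t, (S * S * V + V * (S * S)) (u t)⟫_ℂ) t := by
  have hVu := (V.restrictScalars ℝ).hasFDerivAt.comp_hasDerivAt t (hu t)
  refine ((hv t).inner ℂ hVu).congr_deriv ?_
  have h : ∀ x y, ⟪S (S x), y⟫_ℂ = ⟪x, S (S y)⟫_ℂ := fun x y => by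
    rw [← coe_coe S, hS, hS]
  simp [h]

theorem norm_inner_sub_inner_le (hu : SolvesHeatEq S u) (hv : SolvesHeatEq S v) (V : H →L[ℂ] H)
    {T : ℝ} (hT : 0 ≤ T) :
    ‖⟪S (v 0), V (S (u 0))⟫_ℂ - ⟪S (v T), V (S (u T))⟫_ℂ‖
      ≤ ‖S * S * V + V * (S * S)‖ / 2 * ((‖u 0‖ ^ 2 + ‖v 0‖ ^ 2) / 2) := by
  set W := S * S * V + V * (S * S)
  have hu' := hu.continuous
  have hv' := hv.continuous
  have hFTC := intervalIntegral.integral_eq_sub_of_hasDerivAt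
    (fun t _ => hu.apply.hasDerivAt_inner hS hv.apply V t)
    ((by fun_prop : Continuous fun t => -⟪S (v t), W (S (u t))⟫_ℂ).intervalIntegrable 0 T)
  rw [intervalIntegral.integral_neg, ← neg_sub, neg_inj] at hFTC
  rw [← hFTC]
  calc ‖∫ t in 0..T, ⟪S (v t), W (S (u t))⟫_ℂ‖
      ≤ ∫ t in 0..T, ‖W‖ * ((‖S (v t)‖ ^ 2 + ‖S (u t)‖ ^ 2) / 2) :=
        intervalIntegral.norm_integral_le_of_norm_le hT
          (.of_forall fun t _ => norm_inner_apply_le W _ _)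
          ((by fun_prop : Continuous _).intervalIntegrable _ _)
    _ = ‖W‖ / 2 * ((∫ t in 0..T, ‖S (u t)‖ ^ 2) + ∫ t in 0..T, ‖S (v t)‖ ^ 2) := by
        rw [intervalIntegral.integral_const_mul, intervalIntegral.integral_div,
          intervalIntegral.integral_add
          ((by fun_prop : Continuous _).intervalIntegrable _ _)
          ((by fun_prop : Continuous _).intervalIntegrable _ _)]
        ring
    _ ≤ ‖W‖ / 2 * ((‖u 0‖ ^ 2 + ‖v 0‖ ^ 2) / 2) := by
        gcongr
        linarith [hu.integral_norm_sq_le hS T, hv.integral_norm_sq_le hS T]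

theorem tendsto_inner_atTop (hu : SolvesHeatEq S u) (hv : SolvesHeatEq S v) (V : H →L[ℂ] H) :
    Tendsto (fun T => ⟪S (v T), V (S (u T))⟫_ℂ) atTop (𝓝 0) := by
  refine squeeze_zero_norm' ?_ (tendsto_const_nhds.div_atTop tendsto_id :
    Tendsto (fun T => ‖V‖ * ((‖v 0‖ ^ 2 + ‖u 0‖ ^ 2) / 4) / T) _ _)
  filter_upwards [eventually_gt_atTop 0] with T hT
  have hu' := hu.mul_norm_sq_le hS hT.le
  have hv' := hv.mul_norm_sq_le hS hT.le
  refine (norm_inner_apply_le V _ _).trans ?_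
  rw [le_div_iff₀ hT, mul_assoc]
  gcongr
  linarith

end SolvesHeatEq

theorem norm_mul_mul_le_of_isSymmetric [CompleteSpace H] (hS : (S : H →ₗ[ℂ] H).IsSymmetric)
    (V : H →L[ℂ] H) : ‖S * V * S‖ ≤ ‖S * S * V + V * (S * S)‖ / 2 := by
  refine opNorm_le_of_re_inner_le (by positivity) fun x y hx hy => ?_
  have hu := solvesHeatEq_exp S x
  have hv := solvesHeatEq_exp S y
  have hbound : ‖⟪S y, V (S x)⟫_ℂ‖ ≤ ‖S * S * V + V * (S * S)‖ / 2 := by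
    have hlim := ((tendsto_const_nhds (x := ⟪S y, V (S x)⟫_ℂ)).sub
      (hu.tendsto_inner_atTop hS hv V)).norm
    rw [sub_zero] at hlim
    refine le_of_tendsto hlim (eventually_ge_atTop 0 |>.mono fun T hT => ?_)
    simpa [hx, hy] using hu.norm_inner_sub_inner_le hS hv V hT
  calc RCLike.re ⟪(S * V * S) x, y⟫_ℂ ≤ ‖⟪(S * V * S) x, y⟫_ℂ‖ := RCLike.re_le_norm _
    _ = ‖⟪S y, V (S x)⟫_ℂ‖ := by
        rw [← inner_conj_symm, RCLike.norm_conj]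
        exact congrArg _ (hS _ _).symm
    _ ≤ _ := hbound

end HeatFlow

theorem norm_le_one_of_mul_star_mul_eq_self {A : Type*} [NonUnitalNormedRing A] [StarRing A]
    [CStarRing A] {a : A} (ha : a * star a * a = a) : ‖a‖ ≤ 1 := by
  have hp : IsStarProjection (star a * a) :=
    ⟨by rw [IsIdempotentElem, mul_assoc, ← mul_assoc a, ha], .star_mul_self a⟩
  have := hp.norm_le
  rw [CStarRing.norm_star_mul_self] at this
  nlinarith [norm_nonneg a]

theorem IsSelfAdjoint.norm_eq_of_mul_self_eq_star_mul_self {A : Type*} [NonUnitalNormedRing A]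
    [StarRing A] [CStarRing A] {r a : A} (hr : IsSelfAdjoint r) (h : r * r = star a * a) :
    ‖r‖ = ‖a‖ := by
  have := hr.norm_mul_self
  rw [h, CStarRing.norm_star_mul_self, sq] at this
  exact (mul_self_inj (norm_nonneg r) (norm_nonneg a)).1 this.symm

theorem spectralRadius_mul_comm {𝕜 A : Type*} [NormedField 𝕜] [Ring A] [Algebra 𝕜 A]
    (a b : A) : spectralRadius 𝕜 (a * b) = spectralRadius 𝕜 (b * a) := by
  suffices ∀ a b : A, spectralRadius 𝕜 (a * b) ≤ spectralRadius 𝕜 (b * a) from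
    le_antisymm (this a b) (this b a)
  intro a b
  refine iSup₂_le fun k hk => ?_
  obtain rfl | hk0 := eq_or_ne k 0
  · simp
  · have hk' : k ∈ spectrum 𝕜 (b * a) \ {0} := spectrum.nonzero_mul_comm (𝕜 := 𝕜) a b ▸ ⟨hk, hk0⟩
    exact le_iSup₂ (f := fun k (_ : k ∈ spectrum 𝕜 (b * a)) => (‖k‖₊ : ENNReal)) k hk'.1

theorem ContinuousLinearMap.spectralRadius_le_nnnorm {𝕜 E : Type*} [NontriviallyNormedField 𝕜]
    [NormedAddCommGroup E] [NormedSpace 𝕜 E] [CompleteSpace E] (a : E →L[𝕜] E) :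
    spectralRadius 𝕜 a ≤ ‖a‖₊ := by
  obtain _ | _ := subsingleton_or_nontrivial E
  · simp [spectralRadius, spectrum.of_subsingleton]
  · exact spectrum.spectralRadius_le_nnnorm a

namespace PolarDecomp

variable {H : Type*} [NormedAddCommGroup H] [InnerProductSpace ℂ H] [CompleteSpace H]
  {T : H →L[ℂ] H} (P : PolarDecomp T)

theorem norm_mean : ‖P.mean‖ = ‖P.V * P.R + P.R * P.V‖ / 2 := by
  rw [mean, norm_smul, norm_inv, RCLike.norm_ofNat, inv_mul_eq_div]

theorem norm_R : ‖P.R‖ = ‖T‖ :=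
  P.posR.isSelfAdjoint.norm_eq_of_mul_self_eq_star_mul_self P.sqR

theorem norm_V_le_one : ‖P.V‖ ≤ 1 :=
  norm_le_one_of_mul_star_mul_eq_self P.partIso

theorem norm_mean_le : ‖P.mean‖ ≤ ‖T‖ := by
  have hRV : ‖P.R * P.V‖ ≤ ‖T‖ :=
    calc ‖P.R * P.V‖ ≤ ‖P.R‖ * ‖P.V‖ := norm_mul_le _ _
      _ ≤ ‖T‖ * 1 := by rw [P.norm_R]; gcongr; exact P.norm_V_le_one
      _ = ‖T‖ := mul_one _
  rw [P.norm_mean, ← P.factor]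
  linarith [norm_add_le T (P.R * P.V)]

end PolarDecomp

theorem aluthge_norm_le_mean_norm_le_norm {H : Type*} [NormedAddCommGroup H]
    [InnerProductSpace ℂ H] [CompleteSpace H] (T : H →L[ℂ] H) (P : PolarDecomp T)
    (S : H →L[ℂ] H) (hS : S.IsPositive) (hS2 : S * S = P.R) :
    ‖S * P.V * S‖ ≤ ‖P.mean‖ ∧ ‖P.mean‖ ≤ ‖T‖ ∧
      spectralRadius ℂ T ≤ (‖P.mean‖₊ : ENNReal) := by
  have haluthge : ‖S * P.V * S‖ ≤ ‖P.mean‖ := by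
    rw [P.norm_mean, ← hS2, add_comm]
    exact norm_mul_mul_le_of_isSymmetric hS.1 P.V
  refine ⟨haluthge, P.norm_mean_le, ?_⟩
  calc spectralRadius ℂ T = spectralRadius ℂ (P.V * S * S) := by rw [mul_assoc, hS2, ← P.factor]
    _ = spectralRadius ℂ (S * P.V * S) := by rw [spectralRadius_mul_comm, ← mul_assoc]
    _ ≤ ‖S * P.V * S‖₊ := spectralRadius_le_nnnorm _
    _ ≤ ‖P.mean‖₊ := by exact_mod_cast haluthge
end

section
/- Let V be a partial isometry on a Hilbert space. Then the mean transform of V is V̂ = (1/2)(I + V*V)V, and the spectrum of V̂ equals the spectrum of V. -/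
/-!
Since `V V* V = V`, `Q := V* V` is a positive idempotent, so it is its own positive square root:
the polar decomposition has modulus `|V| = Q`, and its partial isometry agrees with `V` because both
have the same kernel and `V Q = V`. Hence `V̂ = ½ (V Q + Q V) = ½ (1 + Q) V`. The element
`u := ½ (1 + Q)` is invertible (with inverse `2 - Q`) and `V u = V`, so `V̂ = u V = u V u⁻¹` is
similar to `V` and has the same spectrum.
-/

open ContinuousLinearMap Filter Topology

theorem isIdempotentElem_mul_of_mul_mul_eq {S : Type*} [Semigroup S] {a b : S}
    (h : a * b * a = a) : IsIdempotentElem (b * a) := by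
  rw [IsIdempotentElem, mul_assoc, ← mul_assoc a, h]

theorem IsIdempotentElem.isUnit_one_add {A : Type*} [Ring A] {q : A} (hq : IsIdempotentElem q)
    (h2 : IsUnit (2 : A)) : IsUnit (1 + q) := by
  have hprod : (1 + q) * (2 - q) = 2 := by
    rw [add_mul, one_mul, mul_sub, hq.eq, (Commute.ofNat_right q 2).eq, two_mul]
    abel
  have hcomm : Commute (1 + q) (2 - q) :=
    (Commute.ofNat_right _ 2).sub_right ((Commute.one_left q).add_left (Commute.refl q))
  exact (hcomm.isUnit_mul_iff.mp (by rwa [hprod])).1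

theorem spectrum.mul_eq_of_isUnit_of_mul_eq {R A : Type*} [CommSemiring R] [Ring A] [Algebra R A]
    {a u : A} (hu : IsUnit u) (h : a * u = a) : spectrum R (u * a) = spectrum R a := by
  obtain ⟨u, rfl⟩ := hu
  have h' : a * ↑u⁻¹ = a := by rw [← h, mul_assoc, Units.mul_inv, mul_one, h]
  calc spectrum R (u * a) = spectrum R (u * a * ↑u⁻¹) := by rw [mul_assoc, h']
    _ = spectrum R a := spectrum.units_conjugate

theorem spectrum_half_smul_one_add_mul {𝕜 A : Type*} [Field 𝕜] [NeZero (2 : 𝕜)] [Ring A]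
    [Algebra 𝕜 A] {q a : A} (hq : IsIdempotentElem q) (ha : a * q = a) :
    spectrum 𝕜 ((2⁻¹ : 𝕜) • ((1 + q) * a)) = spectrum 𝕜 a := by
  have h2 : IsUnit (2 : A) := by
    rw [← map_ofNat (algebraMap 𝕜 A) 2]
    exact (IsUnit.mk0 (2 : 𝕜) two_ne_zero).map _
  have hu : IsUnit ((2⁻¹ : 𝕜) • (1 + q)) := by
    rw [Algebra.smul_def]
    exact ((IsUnit.mk0 _ (inv_ne_zero two_ne_zero)).map (algebraMap 𝕜 A)).mul (hq.isUnit_one_add h2)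
  rw [← smul_mul_assoc]
  refine spectrum.mul_eq_of_isUnit_of_mul_eq hu ?_
  rw [mul_smul_comm, mul_add, mul_one, ha, ← two_smul 𝕜, smul_smul, inv_mul_cancel₀ two_ne_zero,
    one_smul]

theorem ContinuousLinearMap.eq_of_eq_mul_of_ker_eq {R E : Type*} [Semiring R] [AddCommGroup E]
    [Module R E] [TopologicalSpace E] {W T P : E →L[R] E} (hfac : T = W * P)
    (hker : LinearMap.ker (W : E →ₗ[R] E) = LinearMap.ker (T : E →ₗ[R] E)) (hTP : T * P = T) :
    W = T := by
  ext x
  have hx : W (x - P x) = 0 := by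
    have hT : x - P x ∈ LinearMap.ker (T : E →ₗ[R] E) := by
      simpa [sub_eq_zero] using (congrArg (· x) hTP).symm
    exact LinearMap.mem_ker.mp (hker ▸ hT)
  calc W x = W (P x) + W (x - P x) := by rw [← map_add, add_sub_cancel]
    _ = T x := by rw [hx, add_zero, hfac]; rfl

namespace PolarDecomp

variable {H : Type*} [NormedAddCommGroup H] [InnerProductSpace ℂ H] [CompleteSpace H]
  {V : H →L[ℂ] H}

theorem R_eq_of_partialIsometry (P : PolarDecomp V) (hV : V * adjoint V * V = V) :
    P.R = adjoint V * V :=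
  (CFC.mul_self_eq_mul_self_iff _ _ ((nonneg_iff_isPositive _).mpr P.posR)
    (star_mul_self_nonneg V)).mp (P.sqR.trans (isIdempotentElem_mul_of_mul_mul_eq hV).eq.symm)

theorem V_eq_of_partialIsometry (P : PolarDecomp V) (hV : V * adjoint V * V = V) : P.V = V :=
  ContinuousLinearMap.eq_of_eq_mul_of_ker_eq (P.R_eq_of_partialIsometry hV ▸ P.factor) P.kerV
    (by rw [← mul_assoc, hV])

theorem mean_eq_of_partialIsometry (P : PolarDecomp V) (hV : V * adjoint V * V = V) :
    P.mean = (2⁻¹ : ℂ) • ((1 + adjoint V * V) * V) := by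
  rw [mean, P.R_eq_of_partialIsometry hV, P.V_eq_of_partialIsometry hV, ← mul_assoc, hV, add_mul,
    one_mul]

end PolarDecomp

theorem mean_transform_partial_isometry {H : Type*} [NormedAddCommGroup H]
    [InnerProductSpace ℂ H] [CompleteSpace H] (V : H →L[ℂ] H)
    (hV : V * adjoint V * V = V) (P : PolarDecomp V) :
    P.mean = (2⁻¹ : ℂ) • ((1 + adjoint V * V) * V) ∧
      spectrum ℂ P.mean = spectrum ℂ V := by
  rw [P.mean_eq_of_partialIsometry hV]
  exact ⟨rfl, spectrum_half_smul_one_add_mul (isIdempotentElem_mul_of_mul_mul_eq hV)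
    (by rw [← mul_assoc, hV])⟩
end

section
/- Let T ∈ B(H) satisfy T² = 0. Then the n-th mean transform iterate satisfies T̂^{(n)} = T/2ⁿ for all n, and hence the mean limit ℓ(T) = lim_n ‖T̂^{(n)}‖ equals 0. -/
open ContinuousLinearMap Filter Topology

open scoped Classical in
noncomputable def meanTransform {H : Type*} [NormedAddCommGroup H] [InnerProductSpace ℂ H]
    [CompleteSpace H] (T : H →L[ℂ] H) : H →L[ℂ] H :=
  if h : Nonempty (PolarDecomp T) then h.some.mean else 0


/-!
If `T = V R` is a polar decomposition, then `ker V = ker T = ker R`, and `T² = 0` reads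
`(V R)² = 0`. Taking adjoints, `V* R V*` is killed by `R`, hence by `V`, and the C*-identity
then gives `V* R V* = 0`; so `V (R V) = 0`, hence `R (R V) = 0` and again `R V = 0`. Thus the
mean transform of `T` is `V R / 2 = T / 2`, and the class of square-zero operators is stable
under scaling, so the iterates are `T / 2ⁿ`.

Since `meanTransform` is `0` when no polar decomposition exists, one must be constructed:
`R = |T|` satisfies `‖R x‖ = ‖T x‖`, so `R x ↦ T x` extends to an isometry `L` on the closure
`K` of the range of `R`, and `V = L ∘ P_K` is a partial isometry with `ker V = Kᗮ = ker R`.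
-/

theorem IsSelfAdjoint.mul_eq_zero_of_mul_mul_self_eq_zero {A : Type*} [NonUnitalNormedRing A]
    [StarRing A] [CStarRing A] {v r : A} (hr : IsSelfAdjoint r)
    (hvr : ∀ c, v * c = 0 ↔ r * c = 0) (h : v * r * (v * r) = 0) : r * v = 0 := by
  have h₁ : v * (star v * (r * star v)) = 0 := by
    refine (hvr _).2 ?_
    simpa [mul_assoc, hr.star_eq] using congrArg star h
  have h₂ : star v * r * star v = 0 := by
    rw [← CStarRing.star_mul_self_eq_zero_iff]
    simp only [star_mul, star_star, hr.star_eq, mul_assoc]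
    rw [h₁, mul_zero, mul_zero]
  have h₃ : r * (r * v) = 0 := by
    refine (hvr _).1 ?_
    simpa [mul_assoc, hr.star_eq] using congrArg star h₂
  rw [← CStarRing.star_mul_self_eq_zero_iff, star_mul, hr.star_eq, mul_assoc, h₃, mul_zero]

section NormedSpace

variable {𝕜 E F G : Type*} [NontriviallyNormedField 𝕜]
  [NormedAddCommGroup E] [NormedSpace 𝕜 E] [NormedAddCommGroup F] [NormedSpace 𝕜 F]
  [NormedAddCommGroup G] [NormedSpace 𝕜 G]

theorem ContinuousLinearMap.ker_eq_of_norm_apply_eq {R : E →L[𝕜] F} {T : E →L[𝕜] G}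
    (h : ∀ x, ‖R x‖ = ‖T x‖) :
    LinearMap.ker (R : E →ₗ[𝕜] F) = LinearMap.ker (T : E →ₗ[𝕜] G) := by
  ext x
  rw [LinearMap.mem_ker, LinearMap.mem_ker, coe_coe, coe_coe, ← norm_eq_zero, h, norm_eq_zero]

theorem ContinuousLinearMap.comp_eq_zero_iff_of_ker_eq {D : Type*} [NormedAddCommGroup D]
    [NormedSpace 𝕜 D] {A : E →L[𝕜] F} {B : E →L[𝕜] G}
    (h : LinearMap.ker (A : E →ₗ[𝕜] F) = LinearMap.ker (B : E →ₗ[𝕜] G)) (C : D →L[𝕜] E) :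
    A ∘L C = 0 ↔ B ∘L C = 0 := by
  simp only [ContinuousLinearMap.ext_iff, comp_apply, zero_apply]
  exact forall_congr' fun x => by simpa using SetLike.ext_iff.1 h (C x)

theorem ContinuousLinearMap.exists_isometry_closure_range_of_norm_apply_eq [CompleteSpace G]
    {R : E →L[𝕜] F} {T : E →L[𝕜] G} (h : ∀ x, ‖R x‖ = ‖T x‖) :
    ∃ L : (LinearMap.range (R : E →ₗ[𝕜] F)).topologicalClosure →L[𝕜] G,
      (∀ y, ‖L y‖ = ‖y‖) ∧ ∀ x hx, L ⟨R x, hx⟩ = T x := by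
  set K := (LinearMap.range (R : E →ₗ[𝕜] F)).topologicalClosure
  let e : E →ₗ[𝕜] K :=
    (R : E →ₗ[𝕜] F).codRestrict K fun x =>
      Submodule.le_topologicalClosure _ (LinearMap.mem_range_self _ x)
  have h_dense : DenseRange e := by
    rw [DenseRange, Subtype.dense_iff, ← Set.range_comp]
    exact (Submodule.topologicalClosure_coe _).subset
  have h_norm : ∀ x, ‖(T : E →ₗ[𝕜] G) x‖ ≤ 1 * ‖e x‖ := fun x => by
    rw [one_mul, coe_coe, ← h]; rfl
  refine ⟨(T : E →ₗ[𝕜] G).extendOfNorm e, fun y => ?_, fun x hx => ?_⟩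
  · refine h_dense.induction_on y (isClosed_eq (by fun_prop) (by fun_prop)) fun x => ?_
    rw [LinearMap.extendOfNorm_eq h_dense ⟨1, h_norm⟩]
    exact (h x).symm
  · exact LinearMap.extendOfNorm_eq h_dense ⟨1, h_norm⟩ x

end NormedSpace

section InnerProductSpace

variable {𝕜 E F : Type*} [RCLike 𝕜] [NormedAddCommGroup E] [InnerProductSpace 𝕜 E]
  [NormedAddCommGroup F] [InnerProductSpace 𝕜 F]

theorem ContinuousLinearMap.ker_comp_orthogonalProjectionOnto_of_norm_map
    (K : Submodule 𝕜 E) [K.HasOrthogonalProjection] {L : K →L[𝕜] F} (hL : ∀ y, ‖L y‖ = ‖y‖) :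
    LinearMap.ker ((L ∘L K.orthogonalProjectionOnto : E →L[𝕜] F) : E →ₗ[𝕜] F) = Kᗮ := by
  have hker : LinearMap.ker (L : K →ₗ[𝕜] F) = ⊥ :=
    LinearMap.ker_eq_bot'.2 fun y hy => norm_eq_zero.1 <| by rw [← hL]; exact norm_eq_zero.2 hy
  rw [toLinearMap_comp, LinearMap.ker_comp_of_ker_eq_bot _ hker]
  exact K.ker_orthogonalProjectionOnto

variable [CompleteSpace E] [CompleteSpace F]

theorem IsSelfAdjoint.norm_apply_eq_of_mul_self_eq {R : E →L[𝕜] E} {T : E →L[𝕜] F}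
    (hR : IsSelfAdjoint R) (h : R ∘L R = adjoint T ∘L T) (x : E) : ‖R x‖ = ‖T x‖ := by
  have hsq : ‖R x‖ ^ 2 = ‖T x‖ ^ 2 := by
    rw [apply_norm_sq_eq_inner_adjoint_left, apply_norm_sq_eq_inner_adjoint_left,
      ← star_eq_adjoint, hR.star_eq]
    exact congrArg (fun A : E →L[𝕜] E => RCLike.re (inner 𝕜 (A x) x)) h
  exact (pow_left_inj₀ (norm_nonneg _) (norm_nonneg _) two_ne_zero).1 hsq

theorem ContinuousLinearMap.comp_adjoint_comp_orthogonalProjectionOnto_of_norm_map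
    (K : Submodule 𝕜 E) [CompleteSpace K] {L : K →L[𝕜] F} (hL : ∀ y, ‖L y‖ = ‖y‖) :
    (L ∘L K.orthogonalProjectionOnto) ∘L adjoint (L ∘L K.orthogonalProjectionOnto) ∘L
      (L ∘L K.orthogonalProjectionOnto) = L ∘L K.orthogonalProjectionOnto := by
  have hLL : ∀ y, adjoint L (L y) = y := fun y =>
    congrArg (fun A : K →L[𝕜] K => A y) ((norm_map_iff_adjoint_comp_self L).1 hL)
  ext x
  simp [adjoint_comp, K.adjoint_orthogonalProjectionOnto, hLL,
    Submodule.orthogonalProjectionOnto_starProjection_of_le le_rfl]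

end InnerProductSpace

section MeanTransform

variable {H : Type*} [NormedAddCommGroup H] [InnerProductSpace ℂ H] [CompleteSpace H]

theorem PolarDecomp.nonempty (T : H →L[ℂ] H) : Nonempty (PolarDecomp T) := by
  set R := CFC.abs T
  have hRpos : R.IsPositive := (nonneg_iff_isPositive R).1 (CFC.abs_nonneg T)
  have hsq : R * R = adjoint T * T := by rw [CFC.abs_mul_abs, star_eq_adjoint]
  have hnorm := hRpos.isSelfAdjoint.norm_apply_eq_of_mul_self_eq hsq
  set K := (LinearMap.range (R : H →ₗ[ℂ] H)).topologicalClosure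
  obtain ⟨L, hL, hLR⟩ := exists_isometry_closure_range_of_norm_apply_eq hnorm
  have hK : Kᗮ = LinearMap.ker (T : H →ₗ[ℂ] H) := by
    rw [Submodule.orthogonal_closure, orthogonal_range, ← star_eq_adjoint,
      hRpos.isSelfAdjoint.star_eq]
    exact ker_eq_of_norm_apply_eq hnorm
  refine ⟨⟨L ∘L K.orthogonalProjectionOnto, R, hRpos, hsq,
    comp_adjoint_comp_orthogonalProjectionOnto_of_norm_map K hL,
    (ker_comp_orthogonalProjectionOnto_of_norm_map K hL).trans hK, ?_⟩⟩
  ext x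
  have hx : R x ∈ K := Submodule.le_topologicalClosure _ (LinearMap.mem_range_self _ x)
  simp [K.orthogonalProjectionOnto_mem_subspace_eq_self ⟨R x, hx⟩, hLR]

theorem PolarDecomp.mean_eq_of_mul_self_eq_zero {T : H →L[ℂ] H} (hT : T * T = 0)
    (P : PolarDecomp T) : P.mean = (2⁻¹ : ℂ) • T := by
  have hnorm := P.posR.isSelfAdjoint.norm_apply_eq_of_mul_self_eq P.sqR
  have hker : LinearMap.ker (P.V : H →ₗ[ℂ] H) = LinearMap.ker (P.R : H →ₗ[ℂ] H) :=
    P.kerV.trans (ker_eq_of_norm_apply_eq hnorm).symm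
  have hRV : P.R * P.V = 0 :=
    P.posR.isSelfAdjoint.mul_eq_zero_of_mul_mul_self_eq_zero (comp_eq_zero_iff_of_ker_eq hker)
      (P.factor ▸ hT)
  rw [PolarDecomp.mean, hRV, add_zero, ← P.factor]

theorem meanTransform_of_mul_self_eq_zero {T : H →L[ℂ] H} (hT : T * T = 0) :
    meanTransform T = (2⁻¹ : ℂ) • T := by
  rw [meanTransform, dif_pos (PolarDecomp.nonempty T)]
  exact PolarDecomp.mean_eq_of_mul_self_eq_zero hT _

theorem iterate_meanTransform_of_mul_self_eq_zero {T : H →L[ℂ] H} (hT : T * T = 0) (n : ℕ) :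
    meanTransform^[n] T = ((2 : ℂ) ^ n)⁻¹ • T := by
  induction n with
  | zero => simp
  | succ n ih =>
    have hsq : (((2 : ℂ) ^ n)⁻¹ • T) * (((2 : ℂ) ^ n)⁻¹ • T) = 0 := by
      rw [smul_mul_smul_comm, hT, smul_zero]
    rw [Function.iterate_succ_apply', ih, meanTransform_of_mul_self_eq_zero hsq, smul_smul,
      pow_succ, mul_inv, mul_comm]

end MeanTransform

theorem mean_iterates_of_square_zero {H : Type*} [NormedAddCommGroup H]
    [InnerProductSpace ℂ H] [CompleteSpace H] (T : H →L[ℂ] H) (hT : T * T = 0) :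
    (∀ n : ℕ, meanTransform^[n] T = ((2 : ℂ) ^ n)⁻¹ • T) ∧
      Tendsto (fun n : ℕ => ‖meanTransform^[n] T‖) atTop (nhds 0) := by
  refine ⟨iterate_meanTransform_of_mul_self_eq_zero hT, ?_⟩
  have hnorm : ∀ n : ℕ, ‖meanTransform^[n] T‖ = (2⁻¹ : ℝ) ^ n * ‖T‖ := fun n => by
    rw [iterate_meanTransform_of_mul_self_eq_zero hT, norm_smul, norm_inv, norm_pow,
      RCLike.norm_two, inv_pow]
  have hpow := tendsto_pow_atTop_nhds_zero_of_lt_one (r := (2⁻¹ : ℝ)) (by norm_num) (by norm_num)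
  simpa [hnorm] using hpow.mul_const ‖T‖
end

section
/- Let x, y be nonzero vectors in a Hilbert space and T = x ⊗ y the rank one operator (x ⊗ y)(u) = ⟨u, y⟩ x. Then the mean transform of T is T̂ = (1/2)(x + (⟨x,y⟩/‖y‖²) y) ⊗ y. -/
open ContinuousLinearMap Filter Topology

noncomputable def rankOne {H : Type*} [NormedAddCommGroup H] [InnerProductSpace ℂ H]
    (x y : H) : H →L[ℂ] H :=
  (ContinuousLinearMap.toSpanSingleton ℂ x).comp (innerSL ℂ y)

/-!
For `T = x ⊗ y` we have `T*T = ‖x‖² y ⊗ y`, whose unique positive square root is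
`|T| = (‖x‖/‖y‖) y ⊗ y`. Since `ker V = ker T = y^⊥`, the operator `V` is determined by `V y`, and
evaluating `T = V|T|` at `y` gives `V y = (‖y‖/‖x‖) x`, i.e. `V = x ⊗ y / (‖x‖‖y‖)`. Hence
`V|T| = T` and `|T|V = (⟨x, y⟩/‖y‖²) y ⊗ y`, and the mean transform is half their sum.
-/

theorem rankOne_eq_innerProductSpace_rankOne {H : Type*} [NormedAddCommGroup H]
    [InnerProductSpace ℂ H] (x y : H) : rankOne x y = InnerProductSpace.rankOne ℂ x y :=
  rfl

open InnerProductSpace in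
theorem eq_rankOne_of_ker_rankOne_le {𝕜 E F : Type*} [RCLike 𝕜] [NormedAddCommGroup E]
    [InnerProductSpace 𝕜 E] [NormedAddCommGroup F] [InnerProductSpace 𝕜 F]
    {x : F} {y : E} (hy : y ≠ 0) {S : E →L[𝕜] F}
    (hS : LinearMap.ker (rankOne 𝕜 x y : E →ₗ[𝕜] F) ≤ LinearMap.ker (S : E →ₗ[𝕜] F)) :
    S = rankOne 𝕜 ((inner 𝕜 y y)⁻¹ • S y) y := by
  have hyy : (inner 𝕜 y y : 𝕜) ≠ 0 := inner_self_ne_zero.mpr hy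
  ext u
  have hker :
      u - (inner 𝕜 y u / inner 𝕜 y y) • y ∈ LinearMap.ker (rankOne 𝕜 x y : E →ₗ[𝕜] F) := by
    rw [LinearMap.mem_ker, ContinuousLinearMap.coe_coe, rankOne_apply, inner_sub_right,
      inner_smul_right, div_mul_cancel₀ _ hyy, sub_self, zero_smul]
  have hSu := LinearMap.mem_ker.mp (hS hker)
  simp only [ContinuousLinearMap.coe_coe, map_sub, map_smul, sub_eq_zero] at hSu
  rw [hSu, rankOne_apply, smul_smul, div_eq_mul_inv]

namespace PolarDecomp

variable {H : Type*} [NormedAddCommGroup H] [InnerProductSpace ℂ H] [CompleteSpace H] {x y : H}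

theorem mean_eq {T : H →L[ℂ] H} (P : PolarDecomp T) :
    P.mean = (2⁻¹ : ℂ) • (T + P.R * P.V) := by
  rw [mean, ← P.factor]

theorem R_eq_of_isPositive {T : H →L[ℂ] H} (P : PolarDecomp T) {R : H →L[ℂ] H}
    (hR : R.IsPositive) (hsq : R * R = adjoint T * T) : P.R = R := by
  rw [← CFC.sqrt_mul_self P.R ((nonneg_iff_isPositive _).mpr P.posR), P.sqR, ← hsq,
    CFC.sqrt_mul_self R ((nonneg_iff_isPositive _).mpr hR)]

open InnerProductSpace in
theorem R_eq_of_rankOne (hy : y ≠ 0) (P : PolarDecomp (_root_.rankOne x y)) :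
    P.R = ((‖x‖ / ‖y‖ : ℝ) : ℂ) • _root_.rankOne y y := by
  refine P.R_eq_of_isPositive
    ((isPositive_rankOne_self y).smul_of_nonneg (Complex.zero_le_real.mpr (by positivity))) ?_
  have hy' : (‖y‖ : ℂ) ≠ 0 := by exact_mod_cast norm_ne_zero_iff.mpr hy
  simp only [rankOne_eq_innerProductSpace_rankOne, adjoint_rankOne, mul_def, smul_comp, comp_smul,
    rankOne_comp_rankOne, smul_smul, inner_self_eq_norm_sq_to_K]
  congr 1
  simp only [RCLike.ofReal_eq_complex_ofReal]
  push_cast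
  field_simp

open InnerProductSpace in
theorem V_eq_of_rankOne (hx : x ≠ 0) (hy : y ≠ 0)
    (P : PolarDecomp (_root_.rankOne x y)) :
    P.V = ((‖x‖ * ‖y‖ : ℝ) : ℂ)⁻¹ • _root_.rankOne x y := by
  have hx' : (‖x‖ : ℂ) ≠ 0 := by exact_mod_cast norm_ne_zero_iff.mpr hx
  have hy' : (‖y‖ : ℂ) ≠ 0 := by exact_mod_cast norm_ne_zero_iff.mpr hy
  have hVy : P.V y = ((‖y‖ / ‖x‖ : ℝ) : ℂ) • x := by
    have h := congrArg (· y) P.factor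
    simp only [P.R_eq_of_rankOne hy, rankOne_eq_innerProductSpace_rankOne, mul_apply_eq_comp,
      smul_apply, rankOne_apply, map_smul, smul_smul, inner_self_eq_norm_sq_to_K] at h
    rw [(eq_inv_smul_iff₀ (by simp [hx', hy'])).mpr h.symm, smul_smul]
    congr 1
    simp only [RCLike.ofReal_eq_complex_ofReal]
    push_cast
    field_simp
  refine (eq_rankOne_of_ker_rankOne_le hy P.kerV.ge).trans ?_
  rw [hVy, rankOne_eq_innerProductSpace_rankOne, map_smul, map_smul, smul_apply, smul_apply,
    smul_smul, inner_self_eq_norm_sq_to_K]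
  congr 1
  simp only [RCLike.ofReal_eq_complex_ofReal]
  push_cast
  field_simp

theorem R_mul_V_of_rankOne (hx : x ≠ 0) (hy : y ≠ 0)
    (P : PolarDecomp (_root_.rankOne x y)) :
    P.R * P.V = (inner ℂ y x / (‖y‖ : ℂ) ^ 2) • _root_.rankOne y y := by
  have hx' : (‖x‖ : ℂ) ≠ 0 := by exact_mod_cast norm_ne_zero_iff.mpr hx
  have hy' : (‖y‖ : ℂ) ≠ 0 := by exact_mod_cast norm_ne_zero_iff.mpr hy
  rw [P.R_eq_of_rankOne hy, P.V_eq_of_rankOne hx hy]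
  simp only [rankOne_eq_innerProductSpace_rankOne, mul_def, smul_comp, comp_smul,
    InnerProductSpace.rankOne_comp_rankOne, smul_smul]
  congr 1
  push_cast
  field_simp

end PolarDecomp

theorem mean_transform_rank_one {H : Type*} [NormedAddCommGroup H] [InnerProductSpace ℂ H]
    [CompleteSpace H] (x y : H) (hx : x ≠ 0) (hy : y ≠ 0)
    (P : PolarDecomp (rankOne x y)) :
    P.mean = rankOne ((2⁻¹ : ℂ) • (x + ((inner ℂ y x : ℂ) / (‖y‖ : ℂ) ^ 2) • y)) y := by
  rw [P.mean_eq, P.R_mul_V_of_rankOne hx hy]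
  simp only [rankOne_eq_innerProductSpace_rankOne, map_smul, map_add, add_apply, smul_apply]
end

section
/- Let T ∈ B(H) with N(T*) ⊆ N(T). If T is semi-hyponormal (i.e., (T*T)^{1/2} ≥ (TT*)^{1/2}), then its mean transform T̂ is also semi-hyponormal. -/
open ContinuousLinearMap Filter Topology

/-! Write `T = V R` with `R = |T|`. Since `ker V = ker T = ker R` and `ker V* ⊆ ker T* ⊆ ker T`,
`R` is fixed by both projections `V*V` and `VV*`, on either side. Hence `T̂ = V B` with
`B = (R + V* R V) / 2 ≥ 0` and `V*V B = B`, so `|T̂| = B`, and any `W` with `T̂ = W B` has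
`W B W* = V B V*`. With `D = R - V R V* ≥ 0` the same identities give
`B - V B V* = (V* D V + D) / 2 ≥ 0`. -/

open scoped ComplexOrder

def IsPartialIsometry {R : Type*} [Mul R] [Star R] (v : R) : Prop :=
  v * star v * v = v

lemma isPartialIsometry_star {R : Type*} [Semigroup R] [StarMul R] {v : R}
    (hv : IsPartialIsometry v) : IsPartialIsometry (star v) := by
  unfold IsPartialIsometry
  simpa only [star_mul, star_star, mul_assoc] using congrArg star hv

lemma IsSelfAdjoint.mul_eq_self_of_mul_eq_self {R : Type*} [Mul R] [StarMul R] {a e : R}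
    (ha : IsSelfAdjoint a) (he : IsSelfAdjoint e) (h : a * e = a) : e * a = a := by
  simpa only [star_mul, ha.star_eq, he.star_eq] using congrArg star h

lemma IsSelfAdjoint.conj_eq_of_mul_eq {R : Type*} [Semigroup R] [StarMul R] {r v w : R}
    (hr : IsSelfAdjoint r) (h : v * r = w * r) : v * r * star v = w * r * star w := by
  have h' : r * star v = r * star w := by
    simpa only [star_mul, hr.star_eq] using congrArg star h
  rw [mul_assoc, h', ← mul_assoc, h]

lemma IsPartialIsometry.mul_star_mul_self_of_ker_le {𝕜 E : Type*} [RCLike 𝕜]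
    [NormedAddCommGroup E] [InnerProductSpace 𝕜 E] [CompleteSpace E] {V A : E →L[𝕜] E}
    (hV : IsPartialIsometry V) (hA : V.ker ≤ A.ker) : A * (star V * V) = A := by
  ext x
  have hx : V (x - star V (V x)) = 0 := by
    rw [map_sub, sub_eq_zero]
    exact congr($hV x).symm
  have hAx : A (x - star V (V x)) = 0 := hA hx
  rw [map_sub, sub_eq_zero] at hAx
  exact hAx.symm

namespace PolarDecomp

variable {H : Type*} [NormedAddCommGroup H] [InnerProductSpace ℂ H] [CompleteSpace H]
  {T : H →L[ℂ] H} (P : PolarDecomp T)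

lemma isPartialIsometry_V : IsPartialIsometry P.V :=
  P.partIso

lemma isSelfAdjoint_R : IsSelfAdjoint P.R :=
  P.posR.isSelfAdjoint

lemma ker_R_s13 : P.R.ker = T.ker := by
  rw [← ker_adjoint_comp_self T, ← ker_adjoint_comp_self P.R, P.isSelfAdjoint_R.adjoint_eq]
  exact congrArg (fun S : H →L[ℂ] H => S.ker) P.sqR

lemma R_eq_of_isPositive_s13 {B : H →L[ℂ] H} (hB : B.IsPositive) (hBB : B * B = adjoint T * T) :
    P.R = B :=
  (CFC.sqrt_unique P.sqR ((nonneg_iff_isPositive _).2 P.posR)).symm.trans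
    (CFC.sqrt_unique hBB ((nonneg_iff_isPositive _).2 hB))

lemma R_mul_star_V_mul_V : P.R * (star P.V * P.V) = P.R :=
  P.isPartialIsometry_V.mul_star_mul_self_of_ker_le (P.kerV.trans P.ker_R_s13.symm).le

lemma star_V_mul_V_mul_R : star P.V * P.V * P.R = P.R :=
  P.isSelfAdjoint_R.mul_eq_self_of_mul_eq_self (.star_mul_self P.V) P.R_mul_star_V_mul_V

lemma star_eq_R_mul_star_V : star T = P.R * star P.V := by
  conv_lhs => rw [P.factor]
  rw [star_mul, P.isSelfAdjoint_R.star_eq]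

lemma ker_star_V_le (hker : (star T).ker ≤ T.ker) : (star P.V).ker ≤ P.R.ker := by
  intro x hx
  rw [P.ker_R_s13]
  apply hker
  rw [P.star_eq_R_mul_star_V]
  exact (congrArg P.R hx).trans (map_zero _)

lemma R_mul_V_mul_star_V (hker : (star T).ker ≤ T.ker) : P.R * (P.V * star P.V) = P.R := by
  simpa only [star_star] using
    (isPartialIsometry_star P.isPartialIsometry_V).mul_star_mul_self_of_ker_le
      (P.ker_star_V_le hker)

lemma V_mul_star_V_mul_R (hker : (star T).ker ≤ T.ker) : P.V * star P.V * P.R = P.R :=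
  P.isSelfAdjoint_R.mul_eq_self_of_mul_eq_self (.mul_star_self P.V) (P.R_mul_V_mul_star_V hker)

noncomputable def meanAbs : H →L[ℂ] H := (2⁻¹ : ℂ) • (P.R + star P.V * P.R * P.V)

lemma isPositive_meanAbs : P.meanAbs.IsPositive :=
  (P.posR.add (P.posR.adjoint_conj P.V)).smul_of_nonneg (by positivity)

lemma star_V_mul_V_mul_meanAbs : star P.V * P.V * P.meanAbs = P.meanAbs := by
  have hV := isPartialIsometry_star P.isPartialIsometry_V
  rw [IsPartialIsometry, star_star] at hV
  rw [meanAbs, mul_smul_comm, mul_add, P.star_V_mul_V_mul_R, ← mul_assoc, ← mul_assoc, hV]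

lemma V_mul_meanAbs (hker : (star T).ker ≤ T.ker) : P.V * P.meanAbs = P.mean := by
  rw [meanAbs, mean, mul_smul_comm, mul_add, ← mul_assoc, ← mul_assoc,
    P.V_mul_star_V_mul_R hker]

lemma meanAbs_mul_meanAbs (hker : (star T).ker ≤ T.ker) :
    P.meanAbs * P.meanAbs = adjoint P.mean * P.mean := by
  rw [← P.V_mul_meanAbs hker, ← star_eq_adjoint, star_mul,
    P.isPositive_meanAbs.isSelfAdjoint.star_eq, mul_assoc, ← mul_assoc (star P.V),
    P.star_V_mul_V_mul_meanAbs]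

lemma meanAbs_sub_conj (hker : (star T).ker ≤ T.ker) :
    P.meanAbs - P.V * P.meanAbs * star P.V = (2⁻¹ : ℂ) •
      (star P.V * (P.R - P.V * P.R * star P.V) * P.V + (P.R - P.V * P.R * star P.V)) := by
  have hV : P.V * (star P.V * P.R * P.V) * star P.V = P.R := by
    rw [← mul_assoc, ← mul_assoc, P.V_mul_star_V_mul_R hker, mul_assoc,
      P.R_mul_V_mul_star_V hker]
  have hstarV : star P.V * (P.V * P.R * star P.V) * P.V = P.R := by
    rw [← mul_assoc, ← mul_assoc, P.star_V_mul_V_mul_R, mul_assoc, P.R_mul_star_V_mul_V]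
  rw [meanAbs, mul_smul_comm, smul_mul_assoc, mul_add, add_mul, hV, mul_sub, sub_mul, hstarV]
  module

end PolarDecomp

theorem mean_transform_semihyponormal {H : Type*} [NormedAddCommGroup H]
    [InnerProductSpace ℂ H] [CompleteSpace H] (T : H →L[ℂ] H) (P : PolarDecomp T)
    (hker : LinearMap.ker (adjoint T : H →ₗ[ℂ] H) ≤ LinearMap.ker (T : H →ₗ[ℂ] H))
    (hsh : (P.R - P.V * P.R * adjoint P.V).IsPositive)
    (Q : PolarDecomp P.mean) :
    (Q.R - Q.V * Q.R * adjoint Q.V).IsPositive := by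
  have hQR : Q.R = P.meanAbs :=
    Q.R_eq_of_isPositive_s13 P.isPositive_meanAbs (P.meanAbs_mul_meanAbs hker)
  have hQV : Q.V * Q.R * star Q.V = P.V * P.meanAbs * star P.V := by
    rw [hQR]
    exact P.isPositive_meanAbs.isSelfAdjoint.conj_eq_of_mul_eq
      ((hQR ▸ Q.factor).symm.trans (P.V_mul_meanAbs hker).symm)
  rw [← star_eq_adjoint, hQV, hQR, P.meanAbs_sub_conj hker]
  exact ((hsh.adjoint_conj P.V).add hsh).smul_of_nonneg (by positivity)
end
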